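/- Failure of the perturbative bound for the degenerate noise. Fix γ > 0, λ > 0 and an integer ℓ ≥ 1. Let μ be the product standard Gaussian measure on ℝ^{Λ_ℓ}, Λ_ℓ = {−ℓ,…,ℓ}, and for h : ℝ^{Λ_ℓ} → ℝ define D(h) := Σ_{x∈Λ_ℓ} (γ/2)∫(h(ω^x) − h(ω))² dμ + Σ_{x=−ℓ}^{ℓ−1} (λ/2)∫(h(ω^{x,x+1}) − h(ω))² dμ. Then there is NO constant K > 0 such that for every measurable g : ℝ^{Λ_ℓ} → [0,∞) with ∫ g dμ = 1 and ∫ |ω₀² − 1|·(√g − 1)² dμ < ∞ one has ∫ (ω₀² − 1)(√g(ω) − 1)² dμ(ω) ≤ K · D(√g). Equivalently: for every K > 0 there exists such a g (e.g. g = H_n(ω₀)² with H_n a normalized Hermite polynomial of large even degree n) violating the inequality. -/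

import Mathlib

open MeasureTheory ProbabilityTheory

noncomputable section

/-- The finite box `Λ_ℓ = {−ℓ, …, ℓ}` as an index type. -/
abbrev Idx (l : ℤ) : Type := {z : ℤ // z ∈ Finset.Icc (-l) l}

/-- The product standard Gaussian measure on `ℝ^{Λ_ℓ}`. -/
def gaussBox (l : ℤ) : Measure (Idx l → ℝ) :=
  Measure.pi fun _ : Idx l => gaussianReal 0 1

/-- The Dirichlet form
`D(h) = Σ_{x∈Λ_ℓ} (γ/2)∫(h(ω^x) − h(ω))² dμ + Σ_{x=−ℓ}^{ℓ−1} (λ/2)∫(h(ω^{x,x+1}) − h(ω))² dμ`. -/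
def DirichletForm (gam lam : ℝ) (l : ℤ) (h : (Idx l → ℝ) → ℝ) : ℝ :=
  (∑ x : Idx l,
    gam / 2 * ∫ ω, (h (Function.update ω x (-(ω x))) - h ω) ^ 2 ∂(gaussBox l))
  + ∑ x ∈ (Finset.Icc (-l) (l - 1)).attach,
      lam / 2 * ∫ ω, (h (fun i => ω (Equiv.swap
          (⟨x.1, by have hx := x.2; simp only [Finset.mem_Icc] at hx ⊢; omega⟩ : Idx l)
          (⟨x.1 + 1, by have hx := x.2; simp only [Finset.mem_Icc] at hx ⊢; omega⟩ : Idx l) i))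
        - h ω) ^ 2 ∂(gaussBox l)


/-! The Dirichlet form vanishes on every function that is invariant under sign flips and
permutations of the coordinates, whereas the left-hand side need not. Take
`√g = ∏ₓ ωₓ² / √3`, normalised by `E[X⁴] = 3`; then `D(√g) = 0`, while factorising over the
product measure and using the Gaussian moments `E[X²] = 1`, `E[X⁴] = 3`, `E[X⁶] = 15` gives
`∫ (ω₀² - 1)(√g - 1)² dμ = 4 - (4 / √3) 3^(-ℓ) > 0`. -/

open Real

lemma integrable_pow_gaussianReal (μ : ℝ) (v : NNReal) (n : ℕ) :
    Integrable (fun x : ℝ => x ^ n) (gaussianReal μ v) := by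
  rcases eq_or_ne n 0 with rfl | hn
  · simp
  · refine (integrable_norm_iff (by fun_prop)).1 ?_
    simpa [norm_pow] using (memLp_id_gaussianReal (μ := μ) (v := v) n).integrable_norm_pow hn

lemma integral_gaussianReal_eq_integral_mul_gaussianPDFReal (f : ℝ → ℝ) :
    ∫ x, f x ∂gaussianReal 0 1 = ∫ x, f x * gaussianPDFReal 0 1 x := by
  simp_rw [integral_gaussianReal_eq_integral_smul one_ne_zero, smul_eq_mul, mul_comm]

lemma integrable_mul_gaussianPDFReal {f : ℝ → ℝ} (hf : Integrable f (gaussianReal 0 1)) :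
    Integrable (fun x => f x * gaussianPDFReal 0 1 x) := by
  rw [gaussianReal_of_var_ne_zero 0 one_ne_zero,
    integrable_withDensity_iff_integrable_smul' (measurable_gaussianPDF 0 1)
      (ae_of_all _ fun _ => gaussianPDF_lt_top)] at hf
  simpa [toReal_gaussianPDF, mul_comm] using hf

lemma hasDerivAt_gaussianPDFReal (x : ℝ) :
    HasDerivAt (gaussianPDFReal 0 1) (-x * gaussianPDFReal 0 1 x) x := by
  have h : HasDerivAt (fun y : ℝ => -(y - 0) ^ 2 / (2 * ((1 : NNReal) : ℝ))) (-x) x := by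
    simpa using ((hasDerivAt_pow 2 x).neg.div_const 2).congr_deriv (by ring)
  exact (h.exp.const_mul _).congr_deriv (by rw [gaussianPDFReal]; ring)

/-- Gaussian integration by parts, `E[X · X^(n+1)] = E[(X^(n+1))']`, using `p' = -x p`. -/
lemma integral_pow_add_two_gaussianReal (n : ℕ) :
    ∫ x, x ^ (n + 2) ∂gaussianReal 0 1 = (n + 1) * ∫ x, x ^ n ∂gaussianReal 0 1 := by
  simp_rw [integral_gaussianReal_eq_integral_mul_gaussianPDFReal]
  have hint (m : ℕ) := integrable_mul_gaussianPDFReal (integrable_pow_gaussianReal 0 1 m)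
  have key := integral_mul_deriv_eq_deriv_mul_of_integrable (u := fun x => x ^ (n + 1))
    (u' := fun x => (n + 1) * x ^ n) (v' := fun x => -x * gaussianPDFReal 0 1 x)
    (fun x _ => by simpa using hasDerivAt_pow (n + 1) x)
    (fun x _ => hasDerivAt_gaussianPDFReal x)
    ((hint (n + 2)).neg.congr
      (ae_of_all _ fun x => by simp only [Pi.mul_apply, Pi.neg_apply]; ring))
    (((hint n).const_mul (n + 1)).congr (ae_of_all _ fun x => by simp only [Pi.mul_apply]; ring))
    (hint (n + 1))
  simp only [neg_mul, mul_neg, integral_neg, neg_inj, mul_assoc, integral_const_mul] at key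
  simpa [← mul_assoc, ← pow_succ] using key

lemma integral_sq_gaussianReal : ∫ x, x ^ 2 ∂gaussianReal 0 1 = 1 := by
  simpa using integral_pow_add_two_gaussianReal 0

lemma integral_pow_four_gaussianReal : ∫ x, x ^ 4 ∂gaussianReal 0 1 = 3 := by
  rw [integral_pow_add_two_gaussianReal 2, integral_sq_gaussianReal]; norm_num

lemma integral_pow_six_gaussianReal : ∫ x, x ^ 6 ∂gaussianReal 0 1 = 15 := by
  rw [integral_pow_add_two_gaussianReal 4, integral_pow_four_gaussianReal]; norm_num

section ProductTestFunctions

variable {ι : Type*} [Fintype ι] {ν : Measure ℝ}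

lemma mul_prod_eq_prod_update [DecidableEq ι] (x₀ : ι) (a b : ℝ → ℝ) (ω : ι → ℝ) :
    a (ω x₀) * ∏ x, b (ω x) = ∏ x, Function.update (fun _ => b) x₀ (a * b) x (ω x) := by
  rw [← Finset.mul_prod_erase _ _ (Finset.mem_univ x₀),
    ← Finset.mul_prod_erase _ (fun x => Function.update (fun _ => b) x₀ (a * b) x (ω x))
      (Finset.mem_univ x₀), Function.update_self, Pi.mul_apply, mul_assoc]
  congr 2
  exact Finset.prod_congr rfl fun x hx => by
    rw [Function.update_of_ne (Finset.ne_of_mem_erase hx)]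

lemma integral_mul_prod_pi [SigmaFinite ν] (x₀ : ι) (a b : ℝ → ℝ) :
    ∫ ω, a (ω x₀) * ∏ x, b (ω x) ∂Measure.pi (fun _ : ι => ν)
      = (∫ t, (a * b) t ∂ν) * (∫ t, b t ∂ν) ^ (Fintype.card ι - 1) := by
  classical
  simp_rw [mul_prod_eq_prod_update, integral_fintype_prod_eq_prod]
  rw [← Finset.mul_prod_erase _ _ (Finset.mem_univ x₀), Function.update_self,
    Finset.prod_congr rfl fun x hx => by rw [Function.update_of_ne (Finset.ne_of_mem_erase hx)],
    Finset.prod_const, Finset.card_erase_of_mem (Finset.mem_univ x₀), Finset.card_univ]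

lemma integrable_mul_prod_pi [IsFiniteMeasure ν] (x₀ : ι) {a b : ℝ → ℝ}
    (hab : Integrable (a * b) ν) (hb : Integrable b ν) :
    Integrable (fun ω => a (ω x₀) * ∏ x, b (ω x)) (Measure.pi fun _ : ι => ν) := by
  classical
  simp_rw [mul_prod_eq_prod_update]
  refine Integrable.fintype_prod
    (f := fun x => Function.update (fun _ => b) x₀ (a * b) x) fun x => ?_
  rcases eq_or_ne x x₀ with rfl | hx
  · simpa using hab
  · simpa [Function.update_of_ne hx] using hb

lemma mul_prod_sub_one_sq (x₀ : ι) (a φ : ℝ → ℝ) (ω : ι → ℝ) :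
    a (ω x₀) * (∏ x, φ (ω x) - 1) ^ 2
      = a (ω x₀) * ∏ x, (φ ^ 2) (ω x) - 2 * (a (ω x₀) * ∏ x, φ (ω x))
        + a (ω x₀) * ∏ x, (1 : ℝ → ℝ) (ω x) := by
  simp only [Pi.pow_apply, Pi.one_apply, Finset.prod_pow, Finset.prod_const_one]
  ring

lemma integrable_mul_prod_sub_one_sq_pi [IsFiniteMeasure ν] (x₀ : ι) {a φ : ℝ → ℝ}
    (ha : Integrable a ν) (haφ : Integrable (a * φ) ν) (haφ2 : Integrable (a * φ ^ 2) ν)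
    (hφ : Integrable φ ν) (hφ2 : Integrable (φ ^ 2) ν) :
    Integrable (fun ω => a (ω x₀) * (∏ x, φ (ω x) - 1) ^ 2) (Measure.pi fun _ : ι => ν) := by
  simp_rw [mul_prod_sub_one_sq]
  exact ((integrable_mul_prod_pi x₀ haφ2 hφ2).sub
    ((integrable_mul_prod_pi x₀ haφ hφ).const_mul 2)).add
    (integrable_mul_prod_pi x₀ (a := a) (by rwa [mul_one]) (integrable_const 1))

lemma integral_mul_prod_sub_one_sq_pi [IsProbabilityMeasure ν] (x₀ : ι) {a φ : ℝ → ℝ}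
    (ha : Integrable a ν) (haφ : Integrable (a * φ) ν) (haφ2 : Integrable (a * φ ^ 2) ν)
    (hφ : Integrable φ ν) (hφ2 : Integrable (φ ^ 2) ν) :
    ∫ ω, a (ω x₀) * (∏ x, φ (ω x) - 1) ^ 2 ∂Measure.pi (fun _ : ι => ν)
      = (∫ t, (a * φ ^ 2) t ∂ν) * (∫ t, (φ ^ 2) t ∂ν) ^ (Fintype.card ι - 1)
        - 2 * ((∫ t, (a * φ) t ∂ν) * (∫ t, φ t ∂ν) ^ (Fintype.card ι - 1)) + ∫ t, a t ∂ν := by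
  have h₂ := integrable_mul_prod_pi x₀ haφ2 hφ2
  have h₁ := integrable_mul_prod_pi x₀ haφ hφ
  have h₀ :=
    integrable_mul_prod_pi x₀ (a := a) (b := 1) (by rwa [mul_one]) (integrable_const 1)
  simp_rw [mul_prod_sub_one_sq]
  rw [integral_add ?_ h₀, integral_sub h₂ (h₁.const_mul 2), integral_const_mul,
    integral_mul_prod_pi, integral_mul_prod_pi, integral_mul_prod_pi]
  · simp
  · exact h₂.sub (h₁.const_mul 2)

end ProductTestFunctions

lemma dirichletForm_eq_zero_of_invariant {gam lam : ℝ} {l : ℤ} {h : (Idx l → ℝ) → ℝ}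
    (hflip : ∀ ω x, h (Function.update ω x (-ω x)) = h ω)
    (hperm : ∀ (σ : Equiv.Perm (Idx l)) ω, h (ω ∘ σ) = h ω) :
    DirichletForm gam lam l h = 0 := by
  have hswap (a b : Idx l) (ω : Idx l → ℝ) : h (fun i => ω (Equiv.swap a b i)) = h ω :=
    hperm (Equiv.swap a b) ω
  simp only [DirichletForm, hflip, hswap, sub_self]
  simp

lemma Function.Even.prod_update_neg {ι : Type*} [Fintype ι] [DecidableEq ι] {φ : ℝ → ℝ}
    (hφ : Function.Even φ) (ω : ι → ℝ) (x : ι) :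
    ∏ i, φ (Function.update ω x (-ω x) i) = ∏ i, φ (ω i) := by
  refine Finset.prod_congr rfl fun i _ => ?_
  rcases eq_or_ne i x with rfl | hi
  · rw [Function.update_self, hφ]
  · rw [Function.update_of_ne hi]

section Counterexample

/-- Normalised so that `∫ φ² dγ = E[X⁴] / 3 = 1`. -/
def sqrtDensityFactor (t : ℝ) : ℝ := t ^ 2 / √3

def counterDensity (l : ℤ) (ω : Idx l → ℝ) : ℝ := (∏ x, sqrtDensityFactor (ω x)) ^ 2

lemma sqrtDensityFactor_sq : sqrtDensityFactor ^ 2 = fun t => t ^ 4 / 3 := by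
  ext t
  rw [Pi.pow_apply, sqrtDensityFactor, div_pow, sq_sqrt zero_le_three, ← pow_mul]

lemma sq_sub_one_mul_sqrtDensityFactor :
    (fun t : ℝ => t ^ 2 - 1) * sqrtDensityFactor = fun t => (t ^ 4 - t ^ 2) / √3 := by
  ext t
  simp only [Pi.mul_apply, sqrtDensityFactor]
  ring

lemma sq_sub_one_mul_sqrtDensityFactor_sq :
    (fun t : ℝ => t ^ 2 - 1) * sqrtDensityFactor ^ 2 = fun t => (t ^ 6 - t ^ 4) / 3 := by
  ext t
  simp only [sqrtDensityFactor_sq, Pi.mul_apply]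
  ring

lemma integrable_sq_sub_one_gaussianReal :
    Integrable (fun t : ℝ => t ^ 2 - 1) (gaussianReal 0 1) :=
  (integrable_pow_gaussianReal 0 1 2).sub (integrable_const 1)

lemma integrable_sqrtDensityFactor : Integrable sqrtDensityFactor (gaussianReal 0 1) :=
  (integrable_pow_gaussianReal 0 1 2).div_const _

lemma integrable_sqrtDensityFactor_sq : Integrable (sqrtDensityFactor ^ 2) (gaussianReal 0 1) := by
  rw [sqrtDensityFactor_sq]
  exact (integrable_pow_gaussianReal 0 1 4).div_const _

lemma integrable_sq_sub_one_mul_sqrtDensityFactor :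
    Integrable ((fun t : ℝ => t ^ 2 - 1) * sqrtDensityFactor) (gaussianReal 0 1) := by
  rw [sq_sub_one_mul_sqrtDensityFactor]
  exact ((integrable_pow_gaussianReal 0 1 4).sub (integrable_pow_gaussianReal 0 1 2)).div_const _

lemma integrable_sq_sub_one_mul_sqrtDensityFactor_sq :
    Integrable ((fun t : ℝ => t ^ 2 - 1) * sqrtDensityFactor ^ 2) (gaussianReal 0 1) := by
  rw [sq_sub_one_mul_sqrtDensityFactor_sq]
  exact ((integrable_pow_gaussianReal 0 1 6).sub (integrable_pow_gaussianReal 0 1 4)).div_const _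

lemma integral_sq_sub_one_gaussianReal : ∫ t, t ^ 2 - 1 ∂gaussianReal 0 1 = 0 := by
  rw [integral_sub (integrable_pow_gaussianReal 0 1 2) (integrable_const 1),
    integral_sq_gaussianReal]
  simp

lemma integral_sqrtDensityFactor : ∫ t, sqrtDensityFactor t ∂gaussianReal 0 1 = 1 / √3 := by
  simp only [sqrtDensityFactor, integral_div, integral_sq_gaussianReal]

lemma integral_sqrtDensityFactor_sq :
    ∫ t, (sqrtDensityFactor ^ 2) t ∂gaussianReal 0 1 = 1 := by
  simp only [sqrtDensityFactor_sq, integral_div, integral_pow_four_gaussianReal]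
  norm_num

lemma integral_sq_sub_one_mul_sqrtDensityFactor :
    ∫ t, ((fun t : ℝ => t ^ 2 - 1) * sqrtDensityFactor : ℝ → ℝ) t ∂gaussianReal 0 1
      = 2 / √3 := by
  rw [sq_sub_one_mul_sqrtDensityFactor, integral_div,
    integral_sub (integrable_pow_gaussianReal 0 1 4) (integrable_pow_gaussianReal 0 1 2),
    integral_pow_four_gaussianReal, integral_sq_gaussianReal]
  norm_num

lemma integral_sq_sub_one_mul_sqrtDensityFactor_sq :
    ∫ t, ((fun t : ℝ => t ^ 2 - 1) * sqrtDensityFactor ^ 2 : ℝ → ℝ) t ∂gaussianReal 0 1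
      = 4 := by
  rw [sq_sub_one_mul_sqrtDensityFactor_sq, integral_div,
    integral_sub (integrable_pow_gaussianReal 0 1 6) (integrable_pow_gaussianReal 0 1 4),
    integral_pow_six_gaussianReal, integral_pow_four_gaussianReal]
  norm_num

lemma measurable_counterDensity (l : ℤ) : Measurable (counterDensity l) := by
  unfold counterDensity sqrtDensityFactor
  fun_prop

lemma sqrt_counterDensity (l : ℤ) (ω : Idx l → ℝ) :
    √(counterDensity l ω) = ∏ x, sqrtDensityFactor (ω x) :=
  sqrt_sq (Finset.prod_nonneg fun x _ => by unfold sqrtDensityFactor; positivity)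

lemma integral_counterDensity (l : ℤ) : ∫ ω, counterDensity l ω ∂gaussBox l = 1 := by
  simp_rw [counterDensity, ← Finset.prod_pow]
  rw [gaussBox, integral_fintype_prod_eq_prod (f := fun _ t => sqrtDensityFactor t ^ 2)]
  simp [← Pi.pow_apply, integral_sqrtDensityFactor_sq]

lemma dirichletForm_sqrt_counterDensity (gam lam : ℝ) (l : ℤ) :
    DirichletForm gam lam l (fun ω => √(counterDensity l ω)) = 0 := by
  refine dirichletForm_eq_zero_of_invariant (fun ω x => ?_) (fun σ ω => ?_)
  · rw [sqrt_counterDensity, sqrt_counterDensity,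
      Function.Even.prod_update_neg (fun t => by simp [sqrtDensityFactor]) ω x]
  · rw [sqrt_counterDensity, sqrt_counterDensity]
    exact Equiv.prod_comp σ fun x => sqrtDensityFactor (ω x)

variable {l : ℤ} (x₀ : Idx l)

lemma integral_sq_sub_one_mul_counterDensity_pos :
    0 < ∫ ω, (ω x₀ ^ 2 - 1) * (√(counterDensity l ω) - 1) ^ 2 ∂gaussBox l := by
  simp_rw [sqrt_counterDensity]
  rw [gaussBox, integral_mul_prod_sub_one_sq_pi x₀ integrable_sq_sub_one_gaussianReal
    integrable_sq_sub_one_mul_sqrtDensityFactor integrable_sq_sub_one_mul_sqrtDensityFactor_sq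
    integrable_sqrtDensityFactor integrable_sqrtDensityFactor_sq,
    integral_sq_sub_one_mul_sqrtDensityFactor_sq, integral_sqrtDensityFactor_sq,
    integral_sq_sub_one_mul_sqrtDensityFactor, integral_sqrtDensityFactor,
    integral_sq_sub_one_gaussianReal, one_pow, mul_one, add_zero]
  have one_lt_sqrt_three : 1 < √3 := by rw [lt_sqrt zero_le_one]; norm_num
  have hpow : (1 / √3) ^ (Fintype.card (Idx l) - 1) ≤ 1 :=
    pow_le_one₀ (by positivity) ((div_le_one (by positivity)).2 one_lt_sqrt_three.le)
  have hcross : 2 / √3 * (1 / √3) ^ (Fintype.card (Idx l) - 1) < 2 :=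
    (mul_le_of_le_one_right (by positivity) hpow).trans_lt
      ((div_lt_iff₀ (by positivity)).2 (by linarith))
  linarith

lemma integrable_abs_sq_sub_one_mul_counterDensity :
    Integrable (fun ω => |ω x₀ ^ 2 - 1| * (√(counterDensity l ω) - 1) ^ 2) (gaussBox l) := by
  simp_rw [sqrt_counterDensity]
  refine (integrable_mul_prod_sub_one_sq_pi x₀ integrable_sq_sub_one_gaussianReal
    integrable_sq_sub_one_mul_sqrtDensityFactor integrable_sq_sub_one_mul_sqrtDensityFactor_sq
    integrable_sqrtDensityFactor integrable_sqrtDensityFactor_sq).abs.congr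
    (ae_of_all _ fun ω => ?_)
  simp only [abs_mul, abs_sq]

end Counterexample

/-- failure of the perturbative bound for the degenerate noise:
there is no constant `K > 0` such that for every probability density `g ≥ 0`
(with the displayed integrability), `∫ (ω₀² − 1)(√g − 1)² dμ ≤ K·D(√g)`. -/
theorem stmt18 (gam lam : ℝ)
    (l : ℤ) (hl : 1 ≤ l) :
    ¬ ∃ K : ℝ, 0 < K ∧
      ∀ g : (Idx l → ℝ) → ℝ, Measurable g → (∀ ω, 0 ≤ g ω) →
        (∫ ω, g ω ∂(gaussBox l)) = 1 →
        Integrable (fun ω => |(ω (⟨0, by simp only [Finset.mem_Icc]; omega⟩ : Idx l)) ^ 2 - 1|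
            * (Real.sqrt (g ω) - 1) ^ 2) (gaussBox l) →
        (∫ ω, ((ω (⟨0, by simp only [Finset.mem_Icc]; omega⟩ : Idx l)) ^ 2 - 1)
            * (Real.sqrt (g ω) - 1) ^ 2 ∂(gaussBox l))
          ≤ K * DirichletForm gam lam l (fun ω => Real.sqrt (g ω)) := by
  rintro ⟨K, -, hbound⟩
  have h := hbound (counterDensity l) (measurable_counterDensity l) (fun ω => sq_nonneg _)
    (integral_counterDensity l) (integrable_abs_sq_sub_one_mul_counterDensity _)
  rw [dirichletForm_sqrt_counterDensity, mul_zero] at h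
  exact (integral_sq_sub_one_mul_counterDensity_pos _).not_ge h

end
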